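/- arXiv:2212.14853 — 4 statements merged into one kernel-verified Lean document; each statement's English description precedes it below -/
import Mathlib

section
/- Let f : [0,T] → ℝ≥0 be a Borel, locally bounded, non-negative and non-decreasing function and let ψ : [0,T] → ℝ≥0 be non-negative and non-decreasing. Suppose there exist constants A, B > 0 such that for all t ∈ [0,T], f(t) ≤ A∫₀ᵗ f(s)ds + B(∫₀ᵗ f(s)²ds)^{1/2} + ψ(t). Then for all t ∈ [0,T], f(t) ≤ 2·e^{(2A+B²)t}·ψ(t). -/
open MeasureTheory Set intervalIntegral

lemma my_intervalIntegrable (f : ℝ → ℝ) (hf : Measurable f) (t M : ℝ) (ht : 0 ≤ t)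
    (hb : ∀ s ∈ Icc (0:ℝ) t, |f s| ≤ M) (s : ℝ) (hs : s ∈ Icc (0:ℝ) t) :
    IntervalIntegrable f volume 0 s := by
  have h1 : IntegrableOn f (Icc (0:ℝ) s) volume := by
    apply Measure.integrableOn_of_bounded (M := M)
    · simp [Real.volume_Icc]
    · exact hf.aestronglyMeasurable
    · refine (ae_restrict_iff' measurableSet_Icc).2 (ae_of_all _ fun x hx => ?_)
      exact hb x ⟨hx.1, hx.2.trans hs.2⟩
  have : uIcc (0:ℝ) s = Icc 0 s := uIcc_of_le hs.1
  exact (this ▸ h1).intervalIntegrable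

lemma gronwall_aux (C K M t : ℝ) (hC : 0 < C) (hK : 0 ≤ K) (ht : 0 ≤ t)
    (f : ℝ → ℝ) (hf_meas : Measurable f)
    (hf_bdd : ∀ s ∈ Icc (0:ℝ) t, 0 ≤ f s ∧ f s ≤ M)
    (h : ∀ s ∈ Icc (0:ℝ) t, f s ≤ C * (∫ u in (0:ℝ)..s, f u) + K) :
    f t ≤ K * Real.exp (C * t) := by
  have hM : 0 ≤ M := le_trans (hf_bdd 0 ⟨le_rfl, ht⟩).1 (hf_bdd 0 ⟨le_rfl, ht⟩).2
  have habs : ∀ s ∈ Icc (0:ℝ) t, |f s| ≤ M := fun s hs => by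
    rw [abs_of_nonneg (hf_bdd s hs).1]; exact (hf_bdd s hs).2
  have hint : ∀ s ∈ Icc (0:ℝ) t, IntervalIntegrable f volume 0 s :=
    my_intervalIntegrable f hf_meas t M ht habs
  have key : ∀ n : ℕ, ∀ s ∈ Icc (0:ℝ) t,
      f s ≤ K * Real.exp (C * s) + M * (C * s) ^ n / n.factorial := by
    intro n
    induction n with
    | zero =>
      intro s hs
      have h1 := (hf_bdd s hs).2
      have h2 : 0 ≤ K * Real.exp (C * s) := mul_nonneg hK (Real.exp_pos _).le
      simp only [pow_zero, Nat.factorial_zero, Nat.cast_one, mul_one, div_one]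
      linarith
    | succ n ih =>
      intro s hs
      have hs0 : 0 ≤ s := hs.1
      set g : ℝ → ℝ := fun u => K * Real.exp (C * u) + M * (C * u) ^ n / n.factorial with hg
      have hgcont : Continuous g := by fun_prop
      have hmono : (∫ u in (0:ℝ)..s, f u) ≤ ∫ u in (0:ℝ)..s, g u := by
        apply integral_mono_on hs0 (hint s hs) (hgcont.intervalIntegrable 0 s)
        intro u hu
        exact ih u ⟨hu.1, hu.2.trans hs.2⟩
      have hexp : (∫ u in (0:ℝ)..s, Real.exp (C * u))
          = C⁻¹ * (Real.exp (C * s) - 1) := by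
        rw [integral_comp_mul_left Real.exp hC.ne']
        simp [integral_exp, smul_eq_mul]
      have hpow : (∫ u in (0:ℝ)..s, (C * u) ^ n)
          = C ^ n * (s ^ (n+1) / (n+1)) := by
        have : ∀ u : ℝ, (C * u) ^ n = C ^ n * u ^ n := fun u => mul_pow C u n
        simp_rw [this]
        rw [intervalIntegral.integral_const_mul, integral_pow]
        norm_num
      have hgval : (∫ u in (0:ℝ)..s, g u)
          = K * (C⁻¹ * (Real.exp (C * s) - 1)) + M / n.factorial * (C ^ n * (s ^ (n+1) / (n+1))) := by
        have heq : ∀ u : ℝ, g u = K * Real.exp (C * u) + (M / n.factorial) * (C * u) ^ n :=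
          fun u => by rw [hg]; ring
        simp_rw [heq]
        have h1 : IntervalIntegrable (fun u => K * Real.exp (C * u)) volume 0 s := by
          apply Continuous.intervalIntegrable; fun_prop
        have h2 : IntervalIntegrable (fun u => (M / n.factorial) * (C * u) ^ n) volume 0 s := by
          apply Continuous.intervalIntegrable; fun_prop
        rw [intervalIntegral.integral_add h1 h2, intervalIntegral.integral_const_mul,
          intervalIntegral.integral_const_mul, hexp, hpow]
      have hfinal : C * (∫ u in (0:ℝ)..s, g u) + K
          = K * Real.exp (C * s) + M * (C * s) ^ (n+1) / (n+1).factorial := by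
        rw [hgval]
        have hn : (n.factorial : ℝ) ≠ 0 := Nat.cast_ne_zero.2 n.factorial_ne_zero
        have hn1 : ((n:ℝ) + 1) ≠ 0 := by positivity
        rw [Nat.factorial_succ]
        push_cast
        field_simp
        ring
      have := h s hs
      calc f s ≤ C * (∫ u in (0:ℝ)..s, f u) + K := this
        _ ≤ C * (∫ u in (0:ℝ)..s, g u) + K := by nlinarith
        _ = _ := hfinal
  have hlim := Filter.Tendsto.const_add (K * Real.exp (C * t))
    ((FloorSemiring.tendsto_pow_div_factorial_atTop (K := ℝ) (C * t)).const_mul M)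
  refine ge_of_tendsto' (by simpa using hlim) (fun n => ?_)
  simpa [mul_div_assoc] using key n t ⟨ht, le_rfl⟩

/-- "À la Gronwall" lemma: if `f` is Borel, locally bounded, non-negative and
non-decreasing on `[0,T]`, `ψ` is non-negative and non-decreasing on `[0,T]`, and
`f t ≤ A ∫₀ᵗ f + B (∫₀ᵗ f²)^{1/2} + ψ t` for all `t ∈ [0,T]`, then
`f t ≤ 2 exp((2A+B²) t) ψ t` on `[0,T]`. -/
theorem gronwall_variant (T A B : ℝ) (hT : 0 < T) (hA : 0 < A) (hB : 0 < B)
    (f ψ : ℝ → ℝ)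
    (hf_meas : Measurable f)
    (hf_nonneg : ∀ t ∈ Icc (0 : ℝ) T, 0 ≤ f t)
    (hf_mono : MonotoneOn f (Icc (0 : ℝ) T))
    (hf_locbdd : ∀ t ∈ Icc (0 : ℝ) T, BddAbove (f '' Icc (0 : ℝ) t))
    (hψ_nonneg : ∀ t ∈ Icc (0 : ℝ) T, 0 ≤ ψ t)
    (hψ_mono : MonotoneOn ψ (Icc (0 : ℝ) T))
    (hineq : ∀ t ∈ Icc (0 : ℝ) T,
      f t ≤ A * (∫ s in (0 : ℝ)..t, f s) + B * Real.sqrt (∫ s in (0 : ℝ)..t, (f s) ^ 2) + ψ t) :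
    ∀ t ∈ Icc (0 : ℝ) T, f t ≤ 2 * Real.exp ((2 * A + B ^ 2) * t) * ψ t := by
  intro t ht
  set M := sSup (f '' Icc (0:ℝ) t) with hMdef
  have hsub : Icc (0:ℝ) t ⊆ Icc (0:ℝ) T := Icc_subset_Icc le_rfl ht.2
  have hMle : ∀ s ∈ Icc (0:ℝ) t, f s ≤ M := fun s hs =>
    le_csSup (hf_locbdd t ht) ⟨s, hs, rfl⟩
  have habs : ∀ s ∈ Icc (0:ℝ) t, |f s| ≤ M := fun s hs => by
    rw [abs_of_nonneg (hf_nonneg s (hsub hs))]; exact hMle s hs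
  have hint : ∀ s ∈ Icc (0:ℝ) t, IntervalIntegrable f volume 0 s :=
    my_intervalIntegrable f hf_meas t M ht.1 habs
  have hC : (0:ℝ) < 2 * A + B ^ 2 := by positivity
  have hmain : ∀ s ∈ Icc (0:ℝ) t,
      f s ≤ (2 * A + B ^ 2) * (∫ u in (0:ℝ)..s, f u) + 2 * ψ t := by
    intro s hs
    have hsT : s ∈ Icc (0:ℝ) T := hsub hs
    have hy : (0:ℝ) ≤ ∫ u in (0:ℝ)..s, f u :=
      intervalIntegral.integral_nonneg hs.1 (fun u hu => hf_nonneg u (hsub ⟨hu.1, hu.2.trans hs.2⟩))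
    have hfs : 0 ≤ f s := hf_nonneg s hsT
    -- ∫ f² ≤ f s * ∫ f
    have hI2 : (∫ u in (0:ℝ)..s, (f u) ^ 2) ≤ f s * ∫ u in (0:ℝ)..s, f u := by
      rw [← intervalIntegral.integral_const_mul]
      apply intervalIntegral.integral_mono_on hs.1
      · have habs2 : ∀ u ∈ Icc (0:ℝ) t, |(f u) ^ 2| ≤ M ^ 2 := fun u hu => by
          rw [abs_of_nonneg (sq_nonneg _)]
          have h1 := hf_nonneg u (hsub hu)
          have h2 := hMle u hu
          nlinarith
        exact my_intervalIntegrable (fun u => (f u) ^ 2) (hf_meas.pow_const 2)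
          t (M ^ 2) ht.1 habs2 s hs
      · exact (hint s hs).const_mul (f s)
      · intro u hu
        have h1 := hf_nonneg u (hsub ⟨hu.1, hu.2.trans hs.2⟩)
        have h2 := hf_mono (hsub ⟨hu.1, hu.2.trans hs.2⟩) hsT hu.2
        nlinarith
    have hI2nn : (0:ℝ) ≤ ∫ u in (0:ℝ)..s, (f u) ^ 2 :=
      intervalIntegral.integral_nonneg hs.1 (fun u _ => sq_nonneg _)
    have hsqrt : Real.sqrt (∫ u in (0:ℝ)..s, (f u) ^ 2)
        ≤ Real.sqrt (f s) * Real.sqrt (∫ u in (0:ℝ)..s, f u) := by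
      rw [← Real.sqrt_mul hfs]
      exact Real.sqrt_le_sqrt hI2
    have h1 := hineq s hsT
    have hψts : ψ s ≤ ψ t := hψ_mono hsT ht hs.2
    have hsq1 := Real.sq_sqrt hfs
    have hsq2 := Real.sq_sqrt hy
    have hsqnn := Real.sqrt_nonneg (∫ u in (0:ℝ)..s, (f u) ^ 2)
    have hamgm := sq_nonneg (Real.sqrt (f s) - B * Real.sqrt (∫ u in (0:ℝ)..s, f u))
    nlinarith [mul_le_mul_of_nonneg_left hsqrt hB.le]
  have := gronwall_aux (2 * A + B ^ 2) (2 * ψ t) M t hC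
    (by linarith [hψ_nonneg t ht]) ht.1 f hf_meas
    (fun s hs => ⟨hf_nonneg s (hsub hs), hMle s hs⟩) hmain
  nlinarith [Real.exp_pos ((2 * A + B ^ 2) * t)]
end

section
/- (Stationarity of quadratic optimal quantizers.) Let X be a square-integrable ℝ^d-valued random variable and let x* = (x*_1,…,x*_K) be a minimizer of the quadratic quantization error e_{K,2}(X,·)² = E[min_k |X − x_k|²]. Then the quantized random variable X̂ = Proj_{x*}(X) satisfies E[X | X̂] = X̂, i.e. for each k with P(X̂ = x*_k) > 0, x*_k equals the conditional mean of X on the Voronoi cell V_k(x*). -/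
open MeasureTheory ProbabilityTheory

set_option maxHeartbeats 1000000

/-- Stationarity of quadratic optimal quantizers: if `x*` minimizes the quadratic quantization
error `E[min_k |X − x_k|²]` and `X̂ = Proj_{x*}(X)`, then `E[X | X̂] = X̂` a.s. -/
theorem optimal_quantizer_stationary {Ω : Type*} [m0 : MeasurableSpace Ω]
    (P : Measure Ω) [IsProbabilityMeasure P] {d : ℕ}
    (X : Ω → EuclideanSpace ℝ (Fin d)) (hXmeas : Measurable X)
    (hX2 : Integrable (fun ω => ‖X ω‖ ^ 2) P)
    (K : ℕ) (hK : 0 < K) (xstar : Fin K → EuclideanSpace ℝ (Fin d))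
    (V : Fin K → Set (EuclideanSpace ℝ (Fin d)))
    (hVmeas : ∀ k, MeasurableSet (V k))
    (hVpart : ∀ ξ, ∃! k, ξ ∈ V k)
    (hVoronoi : ∀ k, V k ⊆ {y | ∀ j, dist y (xstar k) ≤ dist y (xstar j)})
    (proj : EuclideanSpace ℝ (Fin d) → EuclideanSpace ℝ (Fin d))
    (hproj : ∀ k, ∀ ξ ∈ V k, proj ξ = xstar k) (hprojmeas : Measurable proj)
    (hopt : ∀ y : Fin K → EuclideanSpace ℝ (Fin d),
      (∫ ω, (⨅ k, dist (X ω) (xstar k)) ^ 2 ∂P) ≤ ∫ ω, (⨅ k, dist (X ω) (y k)) ^ 2 ∂P) :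
    P[X | MeasurableSpace.comap (fun ω => proj (X ω)) inferInstance]
      =ᵐ[P] fun ω => proj (X ω) := by
  classical
  haveI : Nonempty (Fin K) := ⟨⟨0, hK⟩⟩
  have _dummy : True := trivial
  -- basic integrability
  have hXnorm : Integrable (fun ω => ‖X ω‖) P := by
    refine Integrable.mono' (g := fun ω => 1 + ‖X ω‖ ^ 2)
      ((integrable_const 1).add hX2) (hXmeas.norm.aestronglyMeasurable) ?_
    filter_upwards with ω
    rw [Real.norm_of_nonneg (norm_nonneg _)]
    rcases le_or_gt (‖X ω‖) 1 with h | h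
    · nlinarith [norm_nonneg (X ω), sq_nonneg (‖X ω‖)]
    · nlinarith
  have hXint : Integrable X P :=
    Integrable.mono' hXnorm hXmeas.aestronglyMeasurable
      (Filter.Eventually.of_forall fun ω => le_rfl)
  have hdistmeas : ∀ b : EuclideanSpace ℝ (Fin d), Measurable fun ω => dist (X ω) b ^ 2 :=
    fun b => ((hXmeas.dist measurable_const).pow_const 2)
  have hdist2 : ∀ b : EuclideanSpace ℝ (Fin d), Integrable (fun ω => dist (X ω) b ^ 2) P := by
    intro b
    refine Integrable.mono' (g := fun ω => ‖X ω‖ ^ 2 + 2 * ‖b‖ * ‖X ω‖ + ‖b‖ ^ 2)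
      ((hX2.add ((hXnorm.const_mul (2 * ‖b‖)))).add (integrable_const _))
      (hdistmeas b).aestronglyMeasurable ?_
    filter_upwards with ω
    rw [Real.norm_of_nonneg (by positivity)]
    have h1 : dist (X ω) b ≤ ‖X ω‖ + ‖b‖ := by
      rw [dist_eq_norm]; exact (norm_sub_le _ _)
    nlinarith [@dist_nonneg _ _ (X ω) b, norm_nonneg (X ω), norm_nonneg b]
  have hbdd : ∀ (ξ : EuclideanSpace ℝ (Fin d)) (c : Fin K → EuclideanSpace ℝ (Fin d)), BddBelow (Set.range fun j => dist ξ (c j)) :=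
    fun ξ c => (Set.finite_range _).bddBelow
  have hinfnonneg : ∀ (ξ : EuclideanSpace ℝ (Fin d)) (c : Fin K → EuclideanSpace ℝ (Fin d)), 0 ≤ ⨅ j, dist ξ (c j) :=
    fun ξ c => le_ciInf fun j => dist_nonneg
  have hinfmeas : ∀ c : Fin K → EuclideanSpace ℝ (Fin d), Measurable fun ω => (⨅ j, dist (X ω) (c j)) ^ 2 := by
    intro c
    refine Measurable.pow_const ?_ 2
    exact Measurable.iInf fun j => hXmeas.dist measurable_const
  have hinf2 : ∀ c : Fin K → EuclideanSpace ℝ (Fin d), Integrable (fun ω => (⨅ j, dist (X ω) (c j)) ^ 2) P := by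
    intro c
    refine Integrable.mono' (hdist2 (c ⟨0, hK⟩)) (hinfmeas c).aestronglyMeasurable ?_
    filter_upwards with ω
    rw [Real.norm_of_nonneg (by positivity)]
    have h1 : (⨅ j, dist (X ω) (c j)) ≤ dist (X ω) (c ⟨0, hK⟩) := ciInf_le (hbdd _ _) _
    have h2 := hinfnonneg (X ω) c
    nlinarith [@dist_nonneg _ _ (X ω) (c ⟨0, hK⟩)]
  -- the infimum on a Voronoi cell
  have hinfcell : ∀ k, ∀ ξ ∈ V k, (⨅ j, dist ξ (xstar j)) = dist ξ (xstar k) := by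
    intro k ξ hξ
    refine le_antisymm (ciInf_le (hbdd _ _) k) (le_ciInf fun j => hVoronoi k hξ j)
  set A : Fin K → Set Ω := fun k => X ⁻¹' V k with hA
  have hAmeas : ∀ k, MeasurableSet (A k) := fun k => hXmeas (hVmeas k)
  -- key stationarity identity
  have hkey : ∀ k, ∫ ω in A k, X ω ∂P = (P (A k)).toReal • xstar k := by
    intro k
    set J : EuclideanSpace ℝ (Fin d) → ℝ := fun b => ∫ ω in A k, dist (X ω) b ^ 2 ∂P with hJ
    have hJmin : ∀ b, J (xstar k) ≤ J b := by
      intro b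
      set y : Fin K → EuclideanSpace ℝ (Fin d) := Function.update xstar k b with hy
      have hsplit1 : (∫ ω in A k, (⨅ j, dist (X ω) (xstar j)) ^ 2 ∂P)
          + ∫ ω in (A k)ᶜ, (⨅ j, dist (X ω) (xstar j)) ^ 2 ∂P
          = ∫ ω, (⨅ j, dist (X ω) (xstar j)) ^ 2 ∂P :=
        integral_add_compl (hAmeas k) (hinf2 xstar)
      have hsplit2 : (∫ ω in A k, (⨅ j, dist (X ω) (y j)) ^ 2 ∂P)
          + ∫ ω in (A k)ᶜ, (⨅ j, dist (X ω) (y j)) ^ 2 ∂P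
          = ∫ ω, (⨅ j, dist (X ω) (y j)) ^ 2 ∂P :=
        integral_add_compl (hAmeas k) (hinf2 y)
      have heq1 : (∫ ω in A k, (⨅ j, dist (X ω) (xstar j)) ^ 2 ∂P) = J (xstar k) := by
        refine setIntegral_congr_fun (hAmeas k) fun ω hω => ?_
        simp only [hinfcell k (X ω) hω]
      have hle1 : (∫ ω in A k, (⨅ j, dist (X ω) (y j)) ^ 2 ∂P) ≤ J b := by
        refine setIntegral_mono_on ((hinf2 y).integrableOn) ((hdist2 b).integrableOn)
          (hAmeas k) fun ω hω => ?_
        have h1 : (⨅ j, dist (X ω) (y j)) ≤ dist (X ω) b := by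
          have := ciInf_le (hbdd (X ω) y) k
          rwa [hy, Function.update_self] at this
        have h2 := hinfnonneg (X ω) y
        nlinarith
      have hle2 : (∫ ω in (A k)ᶜ, (⨅ j, dist (X ω) (y j)) ^ 2 ∂P)
          ≤ ∫ ω in (A k)ᶜ, (⨅ j, dist (X ω) (xstar j)) ^ 2 ∂P := by
        refine setIntegral_mono_on ((hinf2 y).integrableOn) ((hinf2 xstar).integrableOn)
          (hAmeas k).compl fun ω hω => ?_
        obtain ⟨j', hj', _⟩ := hVpart (X ω)
        have hjk : j' ≠ k := fun h => hω (by rwa [h] at hj')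
        have h1 : (⨅ j, dist (X ω) (y j)) ≤ ⨅ j, dist (X ω) (xstar j) := by
          have := ciInf_le (hbdd (X ω) y) j'
          rw [hy, Function.update_of_ne hjk] at this
          rw [hinfcell j' (X ω) hj']
          exact this
        have h2 := hinfnonneg (X ω) y
        have h3 := hinfnonneg (X ω) xstar
        nlinarith
      have hopt' := hopt y
      linarith
    rcases eq_or_ne (P (A k)) 0 with hz | hz
    · rw [show P.restrict (A k) = 0 from Measure.restrict_eq_zero.mpr hz, hz]
      simp
    · set μk : ℝ := (P (A k)).toReal with hμk
      have hμpos : 0 < μk := ENNReal.toReal_pos hz (measure_ne_top P _)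
      set m : EuclideanSpace ℝ (Fin d) := μk⁻¹ • ∫ ω in A k, X ω ∂P with hm
      have hmint : ∫ ω in A k, X ω ∂P = μk • m := by
        rw [hm, smul_inv_smul₀ hμpos.ne']
      have hsub0 : ∫ ω in A k, (X ω - m) ∂P = 0 := by
        rw [integral_sub hXint.integrableOn (integrable_const m).integrableOn, hmint,
          setIntegral_const, sub_eq_zero]
        rfl
      have hId : ∀ b : EuclideanSpace ℝ (Fin d), J b = J m + μk * ‖m - b‖ ^ 2 := by
        intro b
        have hptw : ∀ ω, dist (X ω) b ^ 2
            = dist (X ω) m ^ 2 + (2 * (inner ℝ (X ω - m) (m - b) : ℝ) + ‖m - b‖ ^ 2) := by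
          intro ω
          have : X ω - b = (X ω - m) + (m - b) := by abel
          rw [dist_eq_norm, dist_eq_norm, this, norm_add_sq_real]
          ring
        have hin : IntegrableOn (fun ω => (inner ℝ (X ω - m) (m - b) : ℝ)) (A k) P := by
          refine Integrable.mono' (g := fun ω => (‖X ω‖ + ‖m‖) * ‖m - b‖)
            (((hXnorm.add (integrable_const _)).mul_const _).integrableOn) ?_ ?_
          · exact ((hXmeas.sub measurable_const).inner measurable_const).aestronglyMeasurable
          · filter_upwards with ω
            rw [Real.norm_eq_abs]
            calc |(inner ℝ (X ω - m) (m - b) : ℝ)| ≤ ‖X ω - m‖ * ‖m - b‖ :=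
                abs_real_inner_le_norm _ _
              _ ≤ (‖X ω‖ + ‖m‖) * ‖m - b‖ := by
                  gcongr; exact norm_sub_le _ _
        have hinteq : ∫ ω in A k, (inner ℝ (X ω - m) (m - b) : ℝ) ∂P = 0 := by
          have hf : Integrable (fun ω => X ω - m) (P.restrict (A k)) :=
            hXint.integrableOn.sub (integrable_const m).integrableOn
          have hcomm : ∫ ω in A k, (inner ℝ (X ω - m) (m - b) : ℝ) ∂P
              = ∫ ω in A k, (inner ℝ (m - b) (X ω - m) : ℝ) ∂P :=
            integral_congr_ae (Filter.Eventually.of_forall fun ω => real_inner_comm _ _)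
          rw [hcomm, integral_inner (𝕜 := ℝ) hf (m - b), hsub0, inner_zero_right]
        have hJb : J b = ∫ ω in A k, (dist (X ω) m ^ 2
            + (2 * (inner ℝ (X ω - m) (m - b) : ℝ) + ‖m - b‖ ^ 2)) ∂P :=
          setIntegral_congr_fun (hAmeas k) fun ω _ => hptw ω
        have t1 := hin.const_mul 2
        have t2 : IntegrableOn (fun _ : Ω => ‖m - b‖ ^ 2) (A k) P :=
          (integrable_const _).integrableOn
        have e1 : ∫ ω in A k, (dist (X ω) m ^ 2
            + (2 * (inner ℝ (X ω - m) (m - b) : ℝ) + ‖m - b‖ ^ 2)) ∂P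
            = (∫ ω in A k, dist (X ω) m ^ 2 ∂P)
            + ∫ ω in A k, (2 * (inner ℝ (X ω - m) (m - b) : ℝ) + ‖m - b‖ ^ 2) ∂P :=
          integral_add (hdist2 m).integrableOn (t1.add t2)
        have e2 : ∫ ω in A k, (2 * (inner ℝ (X ω - m) (m - b) : ℝ) + ‖m - b‖ ^ 2) ∂P
            = (∫ ω in A k, 2 * (inner ℝ (X ω - m) (m - b) : ℝ) ∂P)
            + ∫ ω in A k, ‖m - b‖ ^ 2 ∂P := integral_add t1 t2
        have e3 : ∫ ω in A k, 2 * (inner ℝ (X ω - m) (m - b) : ℝ) ∂P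
            = 2 * ∫ ω in A k, (inner ℝ (X ω - m) (m - b) : ℝ) ∂P := integral_const_mul 2 _
        have e4 : ∫ (_ : Ω) in A k, ‖m - b‖ ^ 2 ∂P = μk * ‖m - b‖ ^ 2 := by
          rw [setIntegral_const, smul_eq_mul]
          rfl
        rw [hJb, e1, e2, e3, e4, hinteq]
        simp only [hJ]
        ring
      have h1 := hJmin m
      have h2 := hId (xstar k)
      have : μk * ‖m - xstar k‖ ^ 2 ≤ 0 := by linarith
      have hmx : m = xstar k := by
        have h4 : ‖m - xstar k‖ ^ 2 = 0 := by nlinarith [sq_nonneg ‖m - xstar k‖]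
        have h5 : m - xstar k = 0 := by
          rwa [pow_eq_zero_iff (two_ne_zero), norm_eq_zero] at h4
        exact sub_eq_zero.mp h5
      rw [hmint, hmx]
  -- partition facts
  have hAdisj : Pairwise (Function.onFun Disjoint A) := by
    intro i j hij
    refine Set.disjoint_left.mpr fun ω hi hj => hij ?_
    obtain ⟨k', -, huniq⟩ := hVpart (X ω)
    exact (huniq i hi).trans (huniq j hj).symm
  have hcover : ∀ ω, ∃ k, ω ∈ A k := fun ω => (hVpart (X ω)).exists
  have hgk : ∀ k, ∀ ω ∈ A k, proj (X ω) = xstar k := fun k ω hω => hproj k _ hω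
  set g : Ω → EuclideanSpace ℝ (Fin d) := fun ω => proj (X ω) with hg
  have hgmeas : Measurable g := hprojmeas.comp hXmeas
  have hgint : Integrable g P := by
    obtain ⟨C, hC⟩ : ∃ C, ∀ k, ‖xstar k‖ ≤ C :=
      ⟨Finset.univ.sup' Finset.univ_nonempty (fun k => ‖xstar k‖),
        fun k => Finset.le_sup' (fun k => ‖xstar k‖) (Finset.mem_univ k)⟩
    refine Integrable.mono' (integrable_const C) hgmeas.aestronglyMeasurable ?_
    filter_upwards with ω
    obtain ⟨k, hk⟩ := hcover ω
    simp only [hg]; rw [hgk k ω hk]; exact hC k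
  have hmle : MeasurableSpace.comap g inferInstance ≤ m0 := hgmeas.comap_le
  refine (ae_eq_condExp_of_forall_setIntegral_eq hmle hXint
    (fun s _ _ => hgint.integrableOn) ?_ ?_).symm
  · rintro s ⟨t, ht, rfl⟩ -
    have hsm : MeasurableSet (g ⁻¹' t) := hgmeas ht
    have hseq : g ⁻¹' t = ⋃ k ∈ (Finset.univ : Finset (Fin K)), (A k ∩ g ⁻¹' t) := by
      ext ω
      simp only [Set.mem_iUnion, Finset.mem_univ, Set.mem_inter_iff, exists_prop, true_and]
      exact ⟨fun h => (hcover ω).imp (fun k hk => ⟨hk, h⟩), fun ⟨k, _, h⟩ => h⟩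
    have hmeask : ∀ k ∈ (Finset.univ : Finset (Fin K)), MeasurableSet (A k ∩ g ⁻¹' t) :=
      fun k _ => (hAmeas k).inter hsm
    have hdisj : Set.Pairwise ↑(Finset.univ : Finset (Fin K))
        (Function.onFun Disjoint fun k => A k ∩ g ⁻¹' t) :=
      fun i _ j _ hij => ((hAdisj hij).mono Set.inter_subset_left Set.inter_subset_left)
    rw [hseq, integral_biUnion_finset _ hmeask hdisj (fun k _ => hgint.integrableOn),
        integral_biUnion_finset _ hmeask hdisj (fun k _ => hXint.integrableOn)]
    refine Finset.sum_congr rfl fun k _ => ?_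
    by_cases hkt : xstar k ∈ t
    · have hAsub : A k ∩ g ⁻¹' t = A k :=
        Set.inter_eq_self_of_subset_left fun ω hω => by
          rw [Set.mem_preimage, hg]; simpa [hgk k ω hω] using hkt
      rw [hAsub, hkey k, setIntegral_congr_fun (hAmeas k) (fun ω hω => ?_), setIntegral_const]
      exact rfl
      rw [hg]; exact hgk k ω hω
    · have hAe : A k ∩ g ⁻¹' t = ∅ := by
        ext ω
        simp only [Set.mem_inter_iff, Set.mem_preimage, Set.mem_empty_iff_false, iff_false,
          not_and]
        intro hω hmem
        rw [hg] at hmem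
        simp only at hmem
        rw [hgk k ω hω] at hmem
        exact hkt hmem
      rw [hAe]
      simp
  · exact StronglyMeasurable.aestronglyMeasurable
      ((Measurable.of_comap_le le_rfl).stronglyMeasurable)
end

section
/- (Stability of the optimal quadratic quantization error.) Let μ_n, μ ∈ P_2(ℝ^d) with W_2(μ_n, μ) → 0. Then the squared optimal quantization errors at level K satisfy (e*_{K,2}(μ_n))² − (e*_{K,2}(μ))² ≤ 4·e*_{K,2}(μ)·W_2(μ_n, μ) + 4·W_2²(μ_n, μ) for every n. -/
open MeasureTheory ProbabilityTheory Filter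

/-- `L^p`-Wasserstein distance defined as infimum over couplings. -/
noncomputable def Wdist {E : Type*} [MeasurableSpace E] [PseudoMetricSpace E]
    (p : ℝ) (μ ν : Measure E) : ℝ :=
  sInf {c : ℝ | ∃ π : Measure (E × E), IsProbabilityMeasure π ∧
    π.map Prod.fst = μ ∧ π.map Prod.snd = ν ∧
    c = (∫ z, dist z.1 z.2 ^ p ∂π) ^ (1 / p)}

/-- The squared optimal quadratic quantization error at level `K`. -/
noncomputable def optQuantErrSq {E : Type*} [MeasurableSpace E] [PseudoMetricSpace E]
    (K : ℕ) (ν : Measure E) : ℝ :=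
  sInf {e : ℝ | ∃ x : Fin K → E, e = ∫ ξ, (⨅ k, dist ξ (x k)) ^ 2 ∂ν}

section Helpers

variable {E : Type*} [NormedAddCommGroup E]

lemma fq_nonneg {K : ℕ} (x : Fin K → E) (ξ : E) : 0 ≤ ⨅ k, dist ξ (x k) :=
  Real.iInf_nonneg fun _ => dist_nonneg

lemma fq_triangle {K : ℕ} (hK : 0 < K) (x : Fin K → E) (a b : E) :
    (⨅ k, dist a (x k)) ≤ (⨅ k, dist b (x k)) + dist a b := by
  haveI : Nonempty (Fin K) := Fin.pos_iff_nonempty.mp hK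
  refine le_ciInf_add fun k => ?_
  calc (⨅ j, dist a (x j)) ≤ dist a (x k) :=
        ciInf_le ⟨0, by rintro y ⟨j, rfl⟩; exact dist_nonneg⟩ k
  _ ≤ dist b (x k) + dist a b := by have := dist_triangle a b (x k); linarith

lemma fq_lipschitz {K : ℕ} (hK : 0 < K) (x : Fin K → E) :
    LipschitzWith 1 fun ξ : E => ⨅ k, dist ξ (x k) := by
  apply LipschitzWith.of_dist_le_mul
  intro a b
  rw [NNReal.coe_one, one_mul, Real.dist_eq, abs_le]
  constructor
  · have := fq_triangle hK x b a; rw [dist_comm b a] at this; linarith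
  · have := fq_triangle hK x a b; linarith

lemma fq_le_norm_add {K : ℕ} (hK : 0 < K) (x : Fin K → E) (ξ : E) :
    (⨅ k, dist ξ (x k)) ≤ ‖ξ‖ + ‖x ⟨0, hK⟩‖ := by
  calc (⨅ j, dist ξ (x j)) ≤ dist ξ (x ⟨0, hK⟩) :=
        ciInf_le ⟨0, by rintro y ⟨j, rfl⟩; exact dist_nonneg⟩ _
  _ ≤ ‖ξ‖ + ‖x ⟨0, hK⟩‖ := by rw [dist_eq_norm]; exact (norm_sub_le _ _)

lemma fq_sq_integrable {K : ℕ} (hK : 0 < K) (x : Fin K → E)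
    [MeasurableSpace E] [OpensMeasurableSpace E]
    (ν : Measure E) [IsProbabilityMeasure ν] (hν : Integrable (fun ξ => ‖ξ‖ ^ 2) ν) :
    Integrable (fun ξ => (⨅ k, dist ξ (x k)) ^ 2) ν := by
  refine Integrable.mono' ((hν.const_mul 2).add (integrable_const (2 * ‖x ⟨0, hK⟩‖ ^ 2)))
    (((fq_lipschitz hK x).continuous.pow 2).aestronglyMeasurable) ?_
  filter_upwards with ξ
  simp only [Pi.add_apply]
  rw [Real.norm_eq_abs, abs_of_nonneg (by positivity)]
  have h1 := fq_nonneg x ξ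
  have h2 := fq_le_norm_add hK x ξ
  nlinarith [pow_le_pow_left₀ h1 h2 2, sq_nonneg (‖ξ‖ - ‖x ⟨0, hK⟩‖)]

end Helpers

/-- Stability of the optimal quadratic quantization error: if `W₂(μₙ, μ) → 0` then
`e*(μₙ)² − e*(μ)² ≤ 4 e*(μ) W₂(μₙ, μ) + 4 W₂(μₙ, μ)²` for every `n`. -/
theorem optimal_quantization_error_stability {d : ℕ} (K : ℕ) (hK : 0 < K)
    (μs : ℕ → Measure (EuclideanSpace ℝ (Fin d)))
    (μ : Measure (EuclideanSpace ℝ (Fin d)))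
    [∀ n, IsProbabilityMeasure (μs n)] [IsProbabilityMeasure μ]
    (hμs2 : ∀ n, Integrable (fun ξ => ‖ξ‖ ^ 2) (μs n))
    (hμ2 : Integrable (fun ξ => ‖ξ‖ ^ 2) μ)
    (hconv : Tendsto (fun n => Wdist 2 (μs n) μ) atTop (nhds 0)) :
    ∀ n, optQuantErrSq K (μs n) - optQuantErrSq K μ
      ≤ 4 * Real.sqrt (optQuantErrSq K μ) * Wdist 2 (μs n) μ + 4 * (Wdist 2 (μs n) μ) ^ 2 := by
  intro n
  set E := EuclideanSpace ℝ (Fin d)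
  haveI : Nonempty (Fin K) := Fin.pos_iff_nonempty.mp hK
  set W : ℝ := Wdist 2 (μs n) μ with hWdef
  set e : ℝ := optQuantErrSq K μ with hedef
  set en : ℝ := optQuantErrSq K (μs n) with hendef
  -- the coupling set
  set Sc : Set ℝ := {c : ℝ | ∃ π : Measure (E × E), IsProbabilityMeasure π ∧
    π.map Prod.fst = μs n ∧ π.map Prod.snd = μ ∧
    c = (∫ z, dist z.1 z.2 ^ (2:ℝ) ∂π) ^ (1 / (2:ℝ))} with hScdef
  have hWSc : W = sInf Sc := rfl
  have hSc_ne : Sc.Nonempty := by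
    refine ⟨_, (μs n).prod μ, inferInstance, ?_, ?_, rfl⟩
    · simp [Measure.map_fst_prod]
    · simp [Measure.map_snd_prod]
  have hSc_nonneg : ∀ c ∈ Sc, (0:ℝ) ≤ c := by
    rintro c ⟨π, hπ, h1, h2, rfl⟩
    exact Real.rpow_nonneg
      (integral_nonneg fun z => Real.rpow_nonneg dist_nonneg _) _
  have hW0 : 0 ≤ W := by rw [hWSc]; exact Real.sInf_nonneg hSc_nonneg
  -- the quantization sets
  set SQ : Measure E → Set ℝ :=
    fun ν => {e : ℝ | ∃ x : Fin K → E, e = ∫ ξ, (⨅ k, dist ξ (x k)) ^ 2 ∂ν} with hSQdef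
  have hSQ_ne : ∀ ν, (SQ ν).Nonempty := fun ν => ⟨_, fun _ => 0, rfl⟩
  have hSQ_nonneg : ∀ ν, ∀ c ∈ SQ ν, (0:ℝ) ≤ c := by
    rintro ν c ⟨x, rfl⟩
    exact integral_nonneg fun ξ => by positivity
  have hSQ_bdd : ∀ ν, BddBelow (SQ ν) := fun ν => ⟨0, hSQ_nonneg ν⟩
  have he0 : 0 ≤ e := Real.sInf_nonneg (hSQ_nonneg μ)
  -- main estimate for every ε > 0
  have key : ∀ ε : ℝ, 0 < ε →
      en ≤ (e + ε) + 2 * Real.sqrt (e + ε) * (W + ε) + (W + ε) ^ 2 := by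
    intro ε hε
    obtain ⟨b, hbmem, hb⟩ := Real.lt_sInf_add_pos (hSQ_ne μ) hε
    obtain ⟨x, rfl⟩ := hbmem
    obtain ⟨c, hcmem, hc⟩ := Real.lt_sInf_add_pos hSc_ne hε
    obtain ⟨π, hπ, hfst, hsnd, rfl⟩ := hcmem
    rw [← hWSc] at hc
    set f : E → ℝ := fun ξ => ⨅ k, dist ξ (x k) with hfdef
    have hf_cont : Continuous f := (fq_lipschitz hK x).continuous
    -- integrabilities
    have hIμ : Integrable (fun ξ => f ξ ^ 2) μ := fq_sq_integrable hK x μ hμ2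
    have hIμn : Integrable (fun ξ => f ξ ^ 2) (μs n) := fq_sq_integrable hK x (μs n) (hμs2 n)
    have hfz1 : Integrable (fun z : E × E => f z.1 ^ 2) π := by
      rw [← hfst] at hIμn
      exact (integrable_map_measure ((hf_cont.pow 2).aestronglyMeasurable)
        measurable_fst.aemeasurable).mp hIμn
    have hfz2 : Integrable (fun z : E × E => f z.2 ^ 2) π := by
      rw [← hsnd] at hIμ
      exact (integrable_map_measure ((hf_cont.pow 2).aestronglyMeasurable)
        measurable_snd.aemeasurable).mp hIμ
    have hn1 : Integrable (fun z : E × E => ‖z.1‖ ^ 2) π := by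
      have := hμs2 n; rw [← hfst] at this
      exact (integrable_map_measure ((continuous_norm.pow 2).aestronglyMeasurable)
        measurable_fst.aemeasurable).mp this
    have hn2 : Integrable (fun z : E × E => ‖z.2‖ ^ 2) π := by
      have := hμ2; rw [← hsnd] at this
      exact (integrable_map_measure ((continuous_norm.pow 2).aestronglyMeasurable)
        measurable_snd.aemeasurable).mp this
    have hd_cont : Continuous fun z : E × E => dist z.1 z.2 := continuous_dist
    have hd2 : Integrable (fun z : E × E => dist z.1 z.2 ^ 2) π := by
      refine Integrable.mono' ((hn1.const_mul 2).add (hn2.const_mul 2))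
        ((hd_cont.pow 2).aestronglyMeasurable) ?_
      filter_upwards with z
      simp only [Pi.add_apply]
      rw [Real.norm_eq_abs, abs_of_nonneg (by positivity)]
      have : dist z.1 z.2 ≤ ‖z.1‖ + ‖z.2‖ := by
        rw [dist_eq_norm]; exact norm_sub_le _ _
      nlinarith [dist_nonneg (x := z.1) (y := z.2), sq_nonneg (‖z.1‖ - ‖z.2‖)]
    have hmul : Integrable (fun z : E × E => f z.2 * dist z.1 z.2) π := by
      refine Integrable.mono' (hfz2.add hd2)
        (((hf_cont.comp continuous_snd).mul hd_cont).aestronglyMeasurable) ?_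
      filter_upwards with z
      simp only [Pi.add_apply]
      rw [Real.norm_eq_abs, abs_of_nonneg (mul_nonneg (fq_nonneg x z.2) dist_nonneg)]
      nlinarith [sq_nonneg (f z.2 - dist z.1 z.2)]
    -- transfer integrals
    have hint1 : ∫ ξ, f ξ ^ 2 ∂(μs n) = ∫ z : E × E, f z.1 ^ 2 ∂π := by
      rw [← hfst]; exact integral_map measurable_fst.aemeasurable
        ((hf_cont.pow 2).aestronglyMeasurable)
    have hint2 : ∫ ξ, f ξ ^ 2 ∂μ = ∫ z : E × E, f z.2 ^ 2 ∂π := by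
      rw [← hsnd]; exact integral_map measurable_snd.aemeasurable
        ((hf_cont.pow 2).aestronglyMeasurable)
    -- Cauchy-Schwarz
    have hconj : Real.HolderConjugate 2 2 := Real.HolderConjugate.two_two
    have hmem1 : MemLp (fun z : E × E => f z.2) (ENNReal.ofReal 2) π := by
      rw [show ENNReal.ofReal 2 = 2 by norm_num [ENNReal.ofReal_ofNat]]
      exact (memLp_two_iff_integrable_sq
        ((hf_cont.comp continuous_snd).aestronglyMeasurable)).mpr hfz2
    have hmem2 : MemLp (fun z : E × E => dist z.1 z.2) (ENNReal.ofReal 2) π := by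
      rw [show ENNReal.ofReal 2 = 2 by norm_num [ENNReal.ofReal_ofNat]]
      exact (memLp_two_iff_integrable_sq hd_cont.aestronglyMeasurable).mpr hd2
    have hCS : ∫ z : E × E, f z.2 * dist z.1 z.2 ∂π ≤
        (∫ z : E × E, f z.2 ^ (2:ℝ) ∂π) ^ (1/(2:ℝ)) *
          (∫ z : E × E, dist z.1 z.2 ^ (2:ℝ) ∂π) ^ (1/(2:ℝ)) :=
      integral_mul_le_Lp_mul_Lq_of_nonneg hconj
        (Eventually.of_forall fun z => fq_nonneg x z.2)
        (Eventually.of_forall fun z => dist_nonneg) hmem1 hmem2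
    have h1 : (∫ z : E × E, f z.2 ^ (2:ℝ) ∂π) = ∫ z : E × E, f z.2 ^ 2 ∂π := by
      simp_rw [Real.rpow_two]
    have h2 : (∫ z : E × E, dist z.1 z.2 ^ (2:ℝ) ∂π)
        = ∫ z : E × E, dist z.1 z.2 ^ 2 ∂π := by
      simp_rw [Real.rpow_two]
    have hb' : (∫ ξ, f ξ ^ 2 ∂μ) ≤ e + ε := le_of_lt hb
    have hcW : Real.sqrt (∫ z : E × E, dist z.1 z.2 ^ 2 ∂π) ≤ W + ε := by
      rw [Real.sqrt_eq_rpow, ← h2]; exact hc.le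
    have hBe : Real.sqrt (∫ z : E × E, f z.2 ^ 2 ∂π) ≤ Real.sqrt (e + ε) := by
      apply Real.sqrt_le_sqrt; rw [← hint2]; exact hb'
    have hCS' : ∫ z : E × E, f z.2 * dist z.1 z.2 ∂π
        ≤ Real.sqrt (e + ε) * (W + ε) := by
      refine hCS.trans ?_
      rw [h1, h2, ← Real.sqrt_eq_rpow, ← Real.sqrt_eq_rpow]
      exact mul_le_mul hBe hcW (Real.sqrt_nonneg _) (Real.sqrt_nonneg _)
    have hC2_nonneg : 0 ≤ ∫ z : E × E, dist z.1 z.2 ^ 2 ∂π :=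
      integral_nonneg fun z => by positivity
    have hC2W : (∫ z : E × E, dist z.1 z.2 ^ 2 ∂π) ≤ (W + ε) ^ 2 := by
      nlinarith [Real.sq_sqrt hC2_nonneg,
        Real.sqrt_nonneg (∫ z : E × E, dist z.1 z.2 ^ 2 ∂π), hcW, hW0, hε]
    -- pointwise and integral comparison
    have hpt : ∀ z : E × E, f z.1 ^ 2 ≤
        f z.2 ^ 2 + 2 * (f z.2 * dist z.1 z.2) + dist z.1 z.2 ^ 2 := by
      intro z
      have h1 := fq_triangle hK x z.1 z.2
      have h2 := fq_nonneg x z.1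
      nlinarith
    have hsum : Integrable (fun z : E × E =>
        f z.2 ^ 2 + 2 * (f z.2 * dist z.1 z.2) + dist z.1 z.2 ^ 2) π :=
      (hfz2.add (hmul.const_mul 2)).add hd2
    have hintle : ∫ z : E × E, f z.1 ^ 2 ∂π ≤ ∫ z : E × E,
        (f z.2 ^ 2 + 2 * (f z.2 * dist z.1 z.2) + dist z.1 z.2 ^ 2) ∂π :=
      integral_mono hfz1 hsum hpt
    have e1 : ∫ z : E × E,
          (f z.2 ^ 2 + 2 * (f z.2 * dist z.1 z.2) + dist z.1 z.2 ^ 2) ∂π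
        = (∫ z : E × E, (f z.2 ^ 2 + 2 * (f z.2 * dist z.1 z.2)) ∂π)
          + ∫ z : E × E, dist z.1 z.2 ^ 2 ∂π :=
      integral_add (f := fun z : E × E => f z.2 ^ 2 + 2 * (f z.2 * dist z.1 z.2))
        (g := fun z : E × E => dist z.1 z.2 ^ 2) (hfz2.add (hmul.const_mul 2)) hd2
    have e2 : ∫ z : E × E, (f z.2 ^ 2 + 2 * (f z.2 * dist z.1 z.2)) ∂π
        = (∫ z : E × E, f z.2 ^ 2 ∂π)
          + ∫ z : E × E, 2 * (f z.2 * dist z.1 z.2) ∂π :=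
      integral_add (f := fun z : E × E => f z.2 ^ 2)
        (g := fun z : E × E => 2 * (f z.2 * dist z.1 z.2)) hfz2 (hmul.const_mul 2)
    have e3 : ∫ z : E × E, 2 * (f z.2 * dist z.1 z.2) ∂π
        = 2 * ∫ z : E × E, f z.2 * dist z.1 z.2 ∂π := integral_const_mul 2 _
    rw [e1, e2, e3] at hintle
    -- conclude
    have hen : en ≤ ∫ ξ, f ξ ^ 2 ∂(μs n) := csInf_le (hSQ_bdd (μs n)) ⟨x, rfl⟩
    rw [hint1] at hen
    have hB2e : (∫ z : E × E, f z.2 ^ 2 ∂π) ≤ e + ε := by rw [← hint2]; exact hb'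
    calc en ≤ ∫ z : E × E, f z.1 ^ 2 ∂π := hen
    _ ≤ (e + ε) + 2 * (Real.sqrt (e + ε) * (W + ε)) + (W + ε) ^ 2 := by linarith
    _ = (e + ε) + 2 * Real.sqrt (e + ε) * (W + ε) + (W + ε) ^ 2 := by ring
  -- take the limit ε → 0⁺
  have hlim : Tendsto (fun ε : ℝ => (e + ε) + 2 * Real.sqrt (e + ε) * (W + ε) + (W + ε) ^ 2)
      (nhdsWithin 0 (Set.Ioi 0)) (nhds ((e + 0) + 2 * Real.sqrt (e + 0) * (W + 0) + (W + 0) ^ 2)) := by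
    apply Tendsto.mono_left _ nhdsWithin_le_nhds
    exact (Continuous.tendsto (by fun_prop) 0)
  have hfin : en ≤ e + 2 * Real.sqrt e * W + W ^ 2 := by
    have := ge_of_tendsto hlim (eventually_nhdsWithin_of_forall fun ε hε => key ε hε)
    simpa using this
  have hsqe : 0 ≤ Real.sqrt e := Real.sqrt_nonneg e
  nlinarith [mul_nonneg hsqe hW0, sq_nonneg W]
end

section
/- (Markovian transition for the recursive quantization scheme in the Vlasov setting.) Suppose b(t,x,μ) = ∫β(t,x,u)μ(du) and σ(t,x,μ) = ∫a(t,x,u)μ(du). Let x^{(m)} be quantizers with distinct components and p^{(m)}_k = P(X̂_{t_m} = x^{(m)}_k). Then the weights at step m+1 of the quantization-based Euler scheme satisfy: p^{(m+1)}_j = Σ_{i=1}^{K} P( E_i ∈ V_j(x^{(m+1)}) ) · p^{(m)}_i, where E_i = x^{(m)}_i + h·Σ_k p^{(m)}_k β(t_m, x^{(m)}_i, x^{(m)}_k) + √h·(Σ_k p^{(m)}_k a(t_m, x^{(m)}_i, x^{(m)}_k))·Z_{m+1} and Z_{m+1} ~ N(0, I_q) is independent of X̂_{t_m}. Equivalently,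 the sequence (X̂_{t_m}) is a Markov chain on the quantizer points with transition probabilities given by Gaussian measures of Voronoi cells. -/
open MeasureTheory ProbabilityTheory

/-!
On the event `{X̂_{t_m} = x^{(m)}_i}` the next state `X̃_{t_{m+1}}` is the affine image `E_i` of
the innovation `Z_{m+1}`, and `X̂_{t_{m+1}} = x^{(m+1)}_j` exactly when `X̃_{t_{m+1}}` falls in
the cell `V_j(x^{(m+1)})`. Since `X̂_{t_m}` is measurable with respect to
`σ(X₀, Z_1, …, Z_m)`, which is independent of `Z_{m+1}`, summing over the finitely many values
of `X̂_{t_m}` gives the transition formula.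
-/

open Set

theorem IsPiSystem.image2_inter {α : Type*} {C D : Set (Set α)} (hC : IsPiSystem C)
    (hD : IsPiSystem D) : IsPiSystem (image2 (· ∩ ·) C D) := by
  rintro _ ⟨s₁, hs₁, t₁, ht₁, rfl⟩ _ ⟨s₂, hs₂, t₂, ht₂, rfl⟩ hne
  rw [inter_inter_inter_comm] at hne ⊢
  exact mem_image2_of_mem (hC _ hs₁ _ hs₂ hne.left) (hD _ ht₁ _ ht₂ hne.right)

theorem MeasurableSpace.generateFrom_image2_inter_measurableSet {α : Type*}
    (m₁ m₂ : MeasurableSpace α) :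
    generateFrom (image2 (· ∩ ·) {s | MeasurableSet[m₁] s} {t | MeasurableSet[m₂] t}) =
      m₁ ⊔ m₂ := by
  refine le_antisymm (generateFrom_le ?_) (sup_le (fun s hs => ?_) fun t ht => ?_)
  · rintro _ ⟨s, hs, t, ht, rfl⟩
    exact (le_sup_left (b := m₂) _ hs).inter (le_sup_right (a := m₁) _ ht)
  · exact measurableSet_generateFrom ⟨s, hs, univ, .univ, inter_univ s⟩
  · exact measurableSet_generateFrom ⟨univ, .univ, t, ht, univ_inter t⟩

theorem measurable_apply_of_mem_range {Ω E F ι : Type*} {mΩ : MeasurableSpace Ω}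
    [MeasurableSpace E] [MeasurableSingletonClass E] [MeasurableSpace F] [Countable ι]
    {v : ι → E} {Y : Ω → E} (hY : Measurable Y) (hY_range : ∀ ω, Y ω ∈ range v)
    {G : E → Ω → F} (hG : ∀ i, Measurable (G (v i))) : Measurable fun ω => G (Y ω) ω := by
  intro s hs
  have hpre : (fun ω => G (Y ω) ω) ⁻¹' s = ⋃ i, Y ⁻¹' {v i} ∩ G (v i) ⁻¹' s := by
    ext ω
    obtain ⟨i, hi⟩ := hY_range ω
    simp only [mem_preimage, mem_iUnion, mem_inter_iff, mem_singleton_iff]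
    exact ⟨fun h => ⟨i, hi.symm, hi ▸ h⟩, fun ⟨k, hk, h⟩ => hk ▸ h⟩
  rw [hpre]
  exact .iUnion fun i => (hY (measurableSet_singleton _)).inter (hG i hs)

theorem measurable_iSup_comap_coord {Ω κ ι : Type*} {Z : κ → Ω → EuclideanSpace ℝ ι}
    {U : Set (κ × ι)} {n : κ} (hn : ∀ i, (n, i) ∈ U) :
    Measurable[⨆ k ∈ U, MeasurableSpace.comap (fun ω => Z k.1 ω k.2) inferInstance] (Z n) := by
  refine (WithLp.measurable_toLp 2 (ι → ℝ)).comp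
    (@measurable_pi_iff _ _ _ (_) _ _ |>.2 fun i => ?_)
  exact Measurable.of_comap_le (le_biSup (fun k : κ × ι =>
    MeasurableSpace.comap (fun ω => Z k.1 ω k.2) inferInstance) (hn i))

namespace ProbabilityTheory

variable {Ω : Type*} {mΩ : MeasurableSpace Ω} {μ : Measure Ω}

theorem indep_sup_right_of_indep_sup [IsZeroOrProbabilityMeasure μ]
    {m₁ m₂ m₃ : MeasurableSpace Ω} (h₁ : m₁ ≤ mΩ) (h₂ : m₂ ≤ mΩ) (h₃ : m₃ ≤ mΩ)
    (h₁₂₃ : Indep m₁ (m₂ ⊔ m₃) μ) (h₂₃ : Indep m₂ m₃ μ) : Indep m₂ (m₁ ⊔ m₃) μ := by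
  rw [← MeasurableSpace.generateFrom_image2_inter_measurableSet]
  refine IndepSets.indep h₂ ?_ (@MeasurableSpace.isPiSystem_measurableSet _ m₂)
    ((@MeasurableSpace.isPiSystem_measurableSet _ m₁).image2_inter
      (@MeasurableSpace.isPiSystem_measurableSet _ m₃))
    (@MeasurableSpace.generateFrom_measurableSet _ m₂).symm rfl ?_
  · exact MeasurableSpace.generateFrom_le fun _ ⟨s, hs, t, ht, h⟩ =>
      h ▸ (h₁ _ hs).inter (h₃ _ ht)
  rw [IndepSets_iff]
  rintro u _ hu ⟨s, hs, t, ht, rfl⟩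
  have hut : MeasurableSet[m₂ ⊔ m₃] (u ∩ t) :=
    (le_sup_left (b := m₃) _ hu).inter (le_sup_right (a := m₂) _ ht)
  have h₁₂₃' := (Indep_iff _ _ _).1 h₁₂₃
  calc μ (u ∩ (s ∩ t)) = μ s * μ (u ∩ t) := by rw [inter_left_comm, h₁₂₃' _ _ hs hut]
    _ = μ s * (μ u * μ t) := by rw [(Indep_iff _ _ _).1 h₂₃ _ _ hu ht]
    _ = μ u * μ (s ∩ t) := by rw [h₁₂₃' _ _ hs (le_sup_right (a := m₂) _ ht)]; ring

theorem indep_iSup_sup_of_indepFun [IsZeroOrProbabilityMeasure μ] {ι E : Type*}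
    {β : ι → Type*} [mE : MeasurableSpace E] [mβ : ∀ i, MeasurableSpace (β i)] {X : Ω → E}
    {ξ : ∀ i, Ω → β i} (hX : Measurable X) (hξ : ∀ i, Measurable (ξ i))
    (hξ_indep : iIndepFun ξ μ) (hXξ : IndepFun X (fun ω i => ξ i ω) μ) {S T : Set ι}
    (hST : Disjoint S T) :
    Indep (⨆ i ∈ S, (mβ i).comap (ξ i)) (mE.comap X ⊔ ⨆ i ∈ T, (mβ i).comap (ξ i)) μ := by
  have hle (U : Set ι) :
      ⨆ i ∈ U, (mβ i).comap (ξ i) ≤ MeasurableSpace.pi.comap fun ω i => ξ i ω :=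
    iSup₂_le fun i _ => Measurable.comap_le (f := ξ i)
      ((measurable_pi_apply i).comp (comap_measurable _))
  refine indep_sup_right_of_indep_sup hX.comap_le (iSup₂_le fun i _ => (hξ i).comap_le)
    (iSup₂_le fun i _ => (hξ i).comap_le) ?_
    (indep_iSup_of_disjoint (fun i => (hξ i).comap_le) hξ_indep.iIndep hST)
  exact indep_of_indep_of_le_right hXξ (sup_le (hle S) (hle T))

theorem Indep.measure_setOf_mem_eq_sum {E ι : Type*} [Fintype ι] {m₁ m₂ : MeasurableSpace Ω}
    (h₁ : m₁ ≤ mΩ) (h₂ : m₂ ≤ mΩ) (hind : Indep m₁ m₂ μ) {Y : Ω → E} {x : ι → E}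
    (hx : Function.Injective x) (hY_range : ∀ ω, Y ω ∈ range x)
    (hY : ∀ i, MeasurableSet[m₂] {ω | Y ω = x i}) {S : E → Set Ω}
    (hS : ∀ i, MeasurableSet[m₁] (S (x i))) :
    μ {ω | ω ∈ S (Y ω)} = ∑ i, μ (S (x i)) * μ {ω | Y ω = x i} := by
  have hunion : {ω | ω ∈ S (Y ω)} = ⋃ i, S (x i) ∩ {ω | Y ω = x i} := by
    ext ω
    obtain ⟨i, hi⟩ := hY_range ω
    simp only [mem_ofPred_eq, mem_iUnion, mem_inter_iff]
    exact ⟨fun h => ⟨i, hi ▸ h, hi.symm⟩, fun ⟨k, h, hk⟩ => hk ▸ h⟩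
  have hdisj : Pairwise (Function.onFun Disjoint fun i => S (x i) ∩ {ω | Y ω = x i}) :=
    fun i k hik => disjoint_left.2 fun ω ⟨_, hi⟩ ⟨_, hk⟩ => hik (hx (hi.symm.trans hk))
  rw [hunion, measure_iUnion hdisj fun i => (h₁ _ (hS i)).inter (h₂ _ (hY i)), tsum_fintype]
  exact Finset.sum_congr rfl fun i _ => (Indep_iff _ _ _).1 hind _ _ (hS i) (hY i)

end ProbabilityTheory

section Voronoi

variable {α E ι : Type*} {V : ι → Set α} {proj : α → E} {x : ι → E}

theorem mem_range_of_eqOn_cover (hV : ∀ ζ, ∃ k, ζ ∈ V k)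
    (hproj : ∀ k, ∀ ζ ∈ V k, proj ζ = x k) (ζ : α) : proj ζ ∈ range x :=
  let ⟨k, hk⟩ := hV ζ; ⟨k, (hproj k ζ hk).symm⟩

theorem eq_iff_mem_of_eqOn_cover (hx : Function.Injective x) (hV : ∀ ζ, ∃ k, ζ ∈ V k)
    (hproj : ∀ k, ∀ ζ ∈ V k, proj ζ = x k) {ζ : α} {j : ι} : proj ζ = x j ↔ ζ ∈ V j := by
  refine ⟨fun h => ?_, hproj j ζ⟩
  obtain ⟨k, hk⟩ := hV ζ
  rwa [← hx ((hproj k ζ hk).symm.trans h)]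

end Voronoi

/-- The Euler step with the Vlasov coefficients `b(t, y, μ) = ∫ β(t, y, u) μ(du)` and
`σ(t, y, μ) = ∫ a(t, y, u) μ(du)` frozen at the discrete measure `μ = ∑ₖ p k δ_{x k}`. -/
noncomputable def vlasovEulerStep {ι E F : Type*} [Fintype ι] [NormedAddCommGroup E]
    [NormedSpace ℝ E] [NormedAddCommGroup F] [NormedSpace ℝ F] (β : ℝ → E → E → E)
    (a : ℝ → E → E → F →L[ℝ] E) (h t : ℝ) (x : ι → E) (p : ι → ℝ) (y : E) (z : F) : E :=
  y + h • ∑ k, p k • β t y (x k) + Real.sqrt h • (∑ k, p k • a t y (x k)) z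

theorem continuous_vlasovEulerStep {ι E F : Type*} [Fintype ι] [NormedAddCommGroup E]
    [NormedSpace ℝ E] [NormedAddCommGroup F] [NormedSpace ℝ F] (β : ℝ → E → E → E)
    (a : ℝ → E → E → F →L[ℝ] E) (h t : ℝ) (x : ι → E) (p : ι → ℝ) (y : E) :
    Continuous (vlasovEulerStep β a h t x p y) := by
  unfold vlasovEulerStep
  fun_prop

/-- The point is that `Φ n` need not be jointly measurable: `X̂` takes only the values
`x n i`, at each of which `Φ n (x n i)` is measurable. -/
theorem measurable_quantizedScheme {Ω E F ι : Type*} [MeasurableSpace E]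
    [MeasurableSingletonClass E] [MeasurableSpace F] [Countable ι] {𝓕 : MeasurableSpace Ω}
    {Xtilde Xhat : ℕ → Ω → E} {Z : ℕ → Ω → F} {Φ : ℕ → E → F → E} {proj : ℕ → E → E}
    {x : ℕ → ι → E} {m : ℕ} (hΦ : ∀ n y, Measurable (Φ n y)) (hproj : ∀ n, Measurable (proj n))
    (hproj_range : ∀ n ζ, proj n ζ ∈ range (x n))
    (hXhat : ∀ n, Xhat n = fun ω => proj n (Xtilde n ω)) (hXtilde0 : Measurable[𝓕] (Xtilde 0))
    (hZ : ∀ n < m, Measurable[𝓕] (Z n))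
    (hXtilde : ∀ n < m, ∀ ω, Xtilde (n + 1) ω = Φ n (Xhat n ω) (Z n ω)) :
    ∀ n ≤ m, Measurable[𝓕] (Xhat n) := by
  intro n hn
  induction n with
  | zero => rw [hXhat]; exact (hproj 0).comp hXtilde0
  | succ n ih =>
    have hXtilde_succ : Measurable[𝓕] (Xtilde (n + 1)) := by
      rw [funext (hXtilde n hn)]
      exact measurable_apply_of_mem_range (G := fun y ω => Φ n y (Z n ω)) (ih (by omega))
        (fun ω => by rw [hXhat]; exact hproj_range n _) fun i => (hΦ n (x n i)).comp (hZ n hn)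
    rw [hXhat]
    exact (hproj _).comp hXtilde_succ

theorem recursive_quantization_transition_general {Ω : Type*} [m0 : MeasurableSpace Ω]
    (P : Measure Ω) [IsProbabilityMeasure P] {d q : ℕ} (M K : ℕ)
    (h : ℝ)
    -- Vlasov coefficients:
    (β : ℝ → EuclideanSpace ℝ (Fin d) → EuclideanSpace ℝ (Fin d) → EuclideanSpace ℝ (Fin d))
    (a : ℝ → EuclideanSpace ℝ (Fin d) → EuclideanSpace ℝ (Fin d) →
      (EuclideanSpace ℝ (Fin q) →L[ℝ] EuclideanSpace ℝ (Fin d)))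
    -- initial random variable:
    (X₀ : Ω → EuclideanSpace ℝ (Fin d)) (hX₀meas : Measurable X₀)
    -- i.i.d. standard Gaussian innovations `Z_{m+1}`, independent of `X₀`:
    (Z : ℕ → Ω → EuclideanSpace ℝ (Fin q)) (hZmeas : ∀ m, Measurable (Z m))
    (hZindep : iIndepFun
      (fun (mi : ℕ × Fin q) ω => Z mi.1 ω mi.2) P)
    (hZX₀indep : IndepFun X₀ (fun ω (mi : ℕ × Fin q) => Z mi.1 ω mi.2) P)
    -- quantizers with pairwise distinct components, Voronoi partitions, projections:
    (x : ℕ → Fin K → EuclideanSpace ℝ (Fin d)) (hx : ∀ m, Function.Injective (x m))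
    (V : ℕ → Fin K → Set (EuclideanSpace ℝ (Fin d)))
    (hVmeas : ∀ m k, MeasurableSet (V m k))
    (hVpart : ∀ m ζ, ∃! k, ζ ∈ V m k)
    (proj : ℕ → EuclideanSpace ℝ (Fin d) → EuclideanSpace ℝ (Fin d))
    (hproj : ∀ m k, ∀ ζ ∈ V m k, proj m ζ = x m k) (hprojmeas : ∀ m, Measurable (proj m))
    -- the weights `p^{(m)}_k = P(X̂_{t_m} = x^{(m)}_k)`:
    (pw : ℕ → Fin K → ℝ)
    -- the recursive quantization scheme in the Vlasov setting:
    (Xtilde Xhat : ℕ → Ω → EuclideanSpace ℝ (Fin d))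
    (hXtilde0 : Xtilde 0 = X₀)
    (hXhat : ∀ m, Xhat m = fun ω => proj m (Xtilde m ω))
    (hpw : ∀ m k, pw m k = (P {ω | Xhat m ω = x m k}).toReal)
    (hXtilde : ∀ m < M, ∀ ω, Xtilde (m + 1) ω =
      Xhat m ω + h • ∑ k, pw m k • β (m * h) (Xhat m ω) (x m k)
        + Real.sqrt h • (∑ k, pw m k • a (m * h) (Xhat m ω) (x m k)) (Z m ω)) :
    ∀ m < M, ∀ j : Fin K,
      pw (m + 1) j =
        ∑ i : Fin K,
          (P {ω | (x m i + h • ∑ k, pw m k • β (m * h) (x m i) (x m k)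
              + Real.sqrt h • (∑ k, pw m k • a (m * h) (x m i) (x m k)) (Z m ω))
            ∈ V (m + 1) j}).toReal * pw m i := by
  intro m hm j
  set Φ := fun n : ℕ => vlasovEulerStep β a h (n * h) (x n) (pw n)
  have hΦ n y : Measurable (Φ n y) := (continuous_vlasovEulerStep _ _ _ _ _ _ y).measurable
  have hξ (k : ℕ × Fin q) : Measurable fun ω => Z k.1 ω k.2 :=
    (measurable_pi_apply k.2).comp ((WithLp.measurable_ofLp 2 _).comp (hZmeas k.1))
  have hrange n := mem_range_of_eqOn_cover (fun ζ => (hVpart n ζ).exists) (hproj n)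
  -- the past `σ(X₀, Z_1, …, Z_m)` and the present `σ(Z_{m+1})`, through coordinates
  set 𝓕 := MeasurableSpace.comap X₀ inferInstance ⊔ ⨆ k ∈ {k : ℕ × Fin q | k.1 < m},
    MeasurableSpace.comap (fun ω => Z k.1 ω k.2) inferInstance
  set 𝓖 := ⨆ k ∈ {k : ℕ × Fin q | k.1 = m},
    MeasurableSpace.comap (fun ω => Z k.1 ω k.2) inferInstance
  have h𝓕 : 𝓕 ≤ m0 := sup_le hX₀meas.comap_le (iSup₂_le fun k _ => (hξ k).comap_le)
  have h𝓖 : 𝓖 ≤ m0 := iSup₂_le fun k _ => (hξ k).comap_le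
  have hind : Indep 𝓖 𝓕 P := indep_iSup_sup_of_indepFun hX₀meas hξ hZindep hZX₀indep
    (disjoint_left.2 fun k (hk : k.1 = m) (hk' : k.1 < m) => hk'.ne hk)
  have hXhat_past : Measurable[𝓕] (Xhat m) := measurable_quantizedScheme hΦ hprojmeas hrange
    hXhat (hXtilde0 ▸ Measurable.of_comap_le le_sup_left)
    (fun n hn => (measurable_iSup_comap_coord fun _ => hn).mono le_sup_right le_rfl)
    (fun n hn => hXtilde n (hn.trans hm)) m le_rfl
  have hevent : {ω | Xhat (m + 1) ω = x (m + 1) j} =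
      {ω | ω ∈ {ω' | Φ m (Xhat m ω) (Z m ω') ∈ V (m + 1) j}} := by
    ext ω
    simp only [hXhat (m + 1), mem_ofPred_eq,
      eq_iff_mem_of_eqOn_cover (hx _) (fun ζ => (hVpart _ ζ).exists) (hproj _), hXtilde m hm]
    rfl
  have hXhat_range ω : Xhat m ω ∈ range (x m) := by rw [hXhat]; exact hrange m _
  rw [hpw, hevent, hind.measure_setOf_mem_eq_sum (S := fun y => {ω | Φ m y (Z m ω) ∈ V (m + 1) j})
    h𝓖 h𝓕 (hx m) hXhat_range (fun i => hXhat_past (measurableSet_singleton _))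
    (fun i => ((hΦ m _).comp (measurable_iSup_comap_coord fun _ => rfl)) (hVmeas _ _)),
    ENNReal.toReal_sum fun i _ => by finiteness]
  simp only [ENNReal.toReal_mul, ← hpw]
  rfl

/-- Markovian transition for the recursive quantization scheme in the Vlasov setting:
the weights satisfy `p^{(m+1)}_j = ∑_i P(E_i ∈ V_j(x^{(m+1)})) p^{(m)}_i`, where
`E_i = x^{(m)}_i + h ∑_k p^{(m)}_k β(t_m, x^{(m)}_i, x^{(m)}_k)
      + √h (∑_k p^{(m)}_k a(t_m, x^{(m)}_i, x^{(m)}_k)) Z_{m+1}`. -/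
theorem recursive_quantization_transition {Ω : Type*} [m0 : MeasurableSpace Ω]
    (P : Measure Ω) [IsProbabilityMeasure P] {d q : ℕ} (M K : ℕ) (hM : 0 < M) (hK : 0 < K)
    (T h : ℝ) (hT : 0 < T) (hh : h = T / M)
    -- Vlasov coefficients:
    (β : ℝ → EuclideanSpace ℝ (Fin d) → EuclideanSpace ℝ (Fin d) → EuclideanSpace ℝ (Fin d))
    (a : ℝ → EuclideanSpace ℝ (Fin d) → EuclideanSpace ℝ (Fin d) →
      (EuclideanSpace ℝ (Fin q) →L[ℝ] EuclideanSpace ℝ (Fin d)))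
    -- initial random variable:
    (X₀ : Ω → EuclideanSpace ℝ (Fin d)) (hX₀meas : Measurable X₀)
    -- i.i.d. standard Gaussian innovations `Z_{m+1}`, independent of `X₀`:
    (Z : ℕ → Ω → EuclideanSpace ℝ (Fin q)) (hZmeas : ∀ m, Measurable (Z m))
    (hZgauss : ∀ m i, P.map (fun ω => Z m ω i) = gaussianReal 0 1)
    (hZindep : iIndepFun
      (fun (mi : ℕ × Fin q) ω => Z mi.1 ω mi.2) P)
    (hZX₀indep : IndepFun X₀ (fun ω (mi : ℕ × Fin q) => Z mi.1 ω mi.2) P)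
    -- quantizers with pairwise distinct components, Voronoi partitions, projections:
    (x : ℕ → Fin K → EuclideanSpace ℝ (Fin d)) (hx : ∀ m, Function.Injective (x m))
    (V : ℕ → Fin K → Set (EuclideanSpace ℝ (Fin d)))
    (hVmeas : ∀ m k, MeasurableSet (V m k))
    (hVpart : ∀ m ζ, ∃! k, ζ ∈ V m k)
    (hVoronoi : ∀ m k, V m k ⊆ {y | ∀ j, dist y (x m k) ≤ dist y (x m j)})
    (proj : ℕ → EuclideanSpace ℝ (Fin d) → EuclideanSpace ℝ (Fin d))
    (hproj : ∀ m k, ∀ ζ ∈ V m k, proj m ζ = x m k) (hprojmeas : ∀ m, Measurable (proj m))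
    -- the weights `p^{(m)}_k = P(X̂_{t_m} = x^{(m)}_k)`:
    (pw : ℕ → Fin K → ℝ)
    -- the recursive quantization scheme in the Vlasov setting:
    (Xtilde Xhat : ℕ → Ω → EuclideanSpace ℝ (Fin d))
    (hXtildemeas : ∀ m, Measurable (Xtilde m))
    (hXtilde0 : Xtilde 0 = X₀)
    (hXhat : ∀ m, Xhat m = fun ω => proj m (Xtilde m ω))
    (hpw : ∀ m k, pw m k = (P {ω | Xhat m ω = x m k}).toReal)
    (hXtilde : ∀ m < M, ∀ ω, Xtilde (m + 1) ω =
      Xhat m ω + h • ∑ k, pw m k • β (m * h) (Xhat m ω) (x m k)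
        + Real.sqrt h • (∑ k, pw m k • a (m * h) (Xhat m ω) (x m k)) (Z m ω)) :
    ∀ m < M, ∀ j : Fin K,
      pw (m + 1) j =
        ∑ i : Fin K,
          (P {ω | (x m i + h • ∑ k, pw m k • β (m * h) (x m i) (x m k)
              + Real.sqrt h • (∑ k, pw m k • a (m * h) (x m i) (x m k)) (Z m ω))
            ∈ V (m + 1) j}).toReal * pw m i :=
  recursive_quantization_transition_general (m0 := m0) P M K h β a X₀ hX₀meas Z hZmeas hZindep
    hZX₀indep x hx V hVmeas hVpart proj hproj hprojmeas pw Xtilde Xhat hXtilde0 hXhat hpw hXtilde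
end
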